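/- Let s ∈ {0,1}^ℓ with ℓ ≥ 2 and let q = 0 (1/2)^{ℓ-1} (the character 0 followed by ℓ-1 copies of 1/2). Then d_DTW(s,q) ≥ (ℓ-1)/2, with equality if and only if s[1] = 0. -/

import Mathlib

/-- `IsExpansion x x'` : `x'` is obtained from `x` by duplicating each character an
arbitrary positive number of times. -/
def IsExpansion (x x' : List ℝ) : Prop :=
  ∃ ks : List ℕ, ks.length = x.length ∧ (∀ k ∈ ks, 0 < k) ∧
    x' = (List.zipWith (fun k (a : ℝ) => List.replicate k a) ks x).flatten

/-- The dynamic time warping distance with `ℓ₁` character cost `|a - b|`: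
the minimum over all pairs of equal-length expansions of the `ℓ₁` distance. -/
noncomputable def dtw (x y : List ℝ) : ℝ :=
  sInf { c | ∃ x' y', IsExpansion x x' ∧ IsExpansion y y' ∧ x'.length = y'.length ∧
    c = (List.zipWith (fun a b => |a - b|) x' y').sum }

/-!
Every expansion of a binary `s` is binary, and every expansion of `q` starts with `0` and
still contains at least `ℓ - 1` entries `1/2`. Aligning the two expansions, each `1/2` costs
exactly `1/2` against a binary character, and the two aligned heads cost `|s[1] - 0|`, so every
warping costs at least `|s[1]| + (ℓ - 1)/2`. When `s[1] = 0` the identity warping attains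
`(ℓ - 1)/2`.
-/

/-- Extra entries of the longer list are ignored. -/
def l1Dist (x y : List ℝ) : ℝ :=
  (List.zipWith (fun a b => |a - b|) x y).sum

@[simp]
lemma l1Dist_nil_left (y : List ℝ) : l1Dist [] y = 0 := rfl

@[simp]
lemma l1Dist_cons_cons (a b : ℝ) (x y : List ℝ) :
    l1Dist (a :: x) (b :: y) = |a - b| + l1Dist x y := by
  simp [l1Dist]

lemma l1Dist_nonneg (x y : List ℝ) : 0 ≤ l1Dist x y := by
  induction x generalizing y with
  | nil => simp
  | cons a x ih =>
    cases y with
    | nil => simp [l1Dist]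
    | cons b y => simpa using add_nonneg (abs_nonneg (a - b)) (ih y)

namespace IsExpansion

variable {x x' : List ℝ}

lemma refl (x : List ℝ) : IsExpansion x x := by
  refine ⟨List.replicate x.length 1, by simp, by simp, ?_⟩
  induction x with
  | nil => simp
  | cons a t ih => exact congrArg (a :: ·) ih

lemma eq_nil_of_nil (h : IsExpansion [] x') : x' = [] := by
  obtain ⟨ks, hlen, _, rfl⟩ := h
  simp

lemma exists_of_cons {c : ℝ} {t : List ℝ} (h : IsExpansion (c :: t) x') :
    ∃ k x'', IsExpansion t x'' ∧ x' = List.replicate (k + 1) c ++ x'' := by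
  obtain ⟨_ | ⟨k, ks⟩, hlen, hpos, rfl⟩ := h
  · simp at hlen
  obtain ⟨k, rfl⟩ := Nat.exists_eq_add_one.2 (hpos k List.mem_cons_self)
  exact ⟨k, _, ⟨ks, by simpa using hlen, fun k hk => hpos k (.tail _ hk), rfl⟩, by simp⟩

lemma exists_eq_cons {c : ℝ} {t : List ℝ} (h : IsExpansion (c :: t) x') :
    ∃ u, x' = c :: u := by
  obtain ⟨k, x'', -, rfl⟩ := h.exists_of_cons
  exact ⟨_, rfl⟩

lemma sublist (h : IsExpansion x x') : x.Sublist x' := by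
  induction x generalizing x' with
  | nil => simp
  | cons c t ih =>
    obtain ⟨k, x'', hexp, rfl⟩ := h.exists_of_cons
    exact ((ih hexp).trans (List.sublist_append_right _ _)).cons_cons c

lemma subset (h : IsExpansion x x') : x' ⊆ x := by
  induction x generalizing x' with
  | nil => simp [h.eq_nil_of_nil]
  | cons c t ih =>
    obtain ⟨k, x'', hexp, rfl⟩ := h.exists_of_cons
    intro a ha
    rcases List.mem_append.1 ha with ha | ha
    · simp [List.eq_of_mem_replicate ha]
    · exact .tail _ (ih hexp ha)

end IsExpansion

lemma le_dtw {x y : List ℝ} {b : ℝ} (hxy : x.length = y.length)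
    (h : ∀ x' y', IsExpansion x x' → IsExpansion y y' → x'.length = y'.length →
      b ≤ l1Dist x' y') :
    b ≤ dtw x y :=
  le_csInf ⟨_, x, y, .refl x, .refl y, hxy, rfl⟩
    (by rintro _ ⟨x', y', hx, hy, hl, rfl⟩; exact h x' y' hx hy hl)

lemma dtw_le_l1Dist {x y : List ℝ} (hxy : x.length = y.length) : dtw x y ≤ l1Dist x y :=
  csInf_le ⟨0, by rintro _ ⟨x', y', -, -, -, rfl⟩; exact l1Dist_nonneg x' y'⟩
    ⟨x, y, .refl x, .refl y, hxy, rfl⟩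

section Binary

variable {x : List ℝ}

lemma abs_sub_half_eq_half {a : ℝ} (ha : a = 0 ∨ a = 1) : |a - 1 / 2| = 1 / 2 := by
  rcases ha with rfl | rfl <;> norm_num [abs_of_neg, abs_of_pos]

/-- Against a binary list, every entry `1/2` costs exactly `1/2`. -/
lemma count_half_div_two_le_l1Dist (hx : ∀ a ∈ x, a = 0 ∨ a = 1) {y : List ℝ}
    (hxy : x.length = y.length) : (y.count (1 / 2) : ℝ) / 2 ≤ l1Dist x y := by
  induction x generalizing y with
  | nil => simp [List.length_eq_zero_iff.1 hxy.symm]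
  | cons a x ih =>
    obtain ⟨b, y, rfl⟩ := List.exists_cons_of_length_pos (hxy ▸ Nat.succ_pos _ : 0 < y.length)
    have hrest := ih (fun c hc => hx c (.tail _ hc)) (by simpa using hxy)
    by_cases hb : b = 1 / 2
    · subst hb
      simp only [List.count_cons_self, Nat.cast_add, Nat.cast_one, l1Dist_cons_cons,
        abs_sub_half_eq_half (hx a List.mem_cons_self)]
      linarith
    · simp only [List.count_cons_of_ne hb, l1Dist_cons_cons]
      linarith [abs_nonneg (a - b)]

lemma l1Dist_replicate_half (hx : ∀ a ∈ x, a = 0 ∨ a = 1) :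
    l1Dist x (List.replicate x.length (1 / 2)) = x.length / 2 := by
  induction x with
  | nil => simp
  | cons a x ih =>
    rw [List.length_cons, List.replicate_succ, l1Dist_cons_cons,
      abs_sub_half_eq_half (hx a List.mem_cons_self), ih fun c hc => hx c (.tail _ hc)]
    push_cast
    ring

/-- The heads of the two expansions are aligned with each other, and the `n` halves of the
query survive in the tails. -/
lemma abs_add_le_l1Dist_of_isExpansion {a : ℝ} {t x' y' : List ℝ} {n : ℕ}
    (hbin : ∀ c ∈ a :: t, c = 0 ∨ c = 1) (hx : IsExpansion (a :: t) x')
    (hy : IsExpansion (0 :: List.replicate n (1 / 2)) y') (hxy : x'.length = y'.length) :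
    |a| + n / 2 ≤ l1Dist x' y' := by
  obtain ⟨u, rfl⟩ := hx.exists_eq_cons
  obtain ⟨v, rfl⟩ := hy.exists_eq_cons
  have hu : ∀ c ∈ u, c = 0 ∨ c = 1 := fun c hc => hbin c (hx.subset (.tail _ hc))
  have hv : n ≤ v.count (1 / 2) := by
    simpa [List.count_replicate] using hy.sublist.count_le (1 / 2 : ℝ)
  have hcost := count_half_div_two_le_l1Dist hu (by simpa using hxy)
  rw [l1Dist_cons_cons, sub_zero]
  have : (n : ℝ) ≤ v.count (1 / 2) := by exact_mod_cast hv
  linarith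

end Binary

/-- For a binary sequence `s` of length `ℓ ≥ 2` and the query
`q = 0 (1/2)^(ℓ-1)`, we have `d_DTW(s,q) ≥ (ℓ-1)/2`, with equality iff `s[1] = 0`. -/
theorem dtw_zero_then_halves_query
    (ℓ : ℕ) (hℓ : 2 ≤ ℓ) (s : List ℝ) (hlen : s.length = ℓ)
    (hbin : ∀ c ∈ s, c = 0 ∨ c = 1) :
    let q : List ℝ := 0 :: List.replicate (ℓ - 1) ((1 : ℝ) / 2)
    (ℓ - 1 : ℝ) / 2 ≤ dtw s q ∧
      (dtw s q = (ℓ - 1 : ℝ) / 2 ↔ s.headD 0 = 0) := by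
  intro q
  obtain ⟨a, t, rfl⟩ := List.exists_cons_of_length_pos (by omega : 0 < s.length)
  have ht : t.length = ℓ - 1 := by simp only [List.length_cons] at hlen; omega
  have hcast : ((ℓ - 1 : ℕ) : ℝ) = ℓ - 1 := by push_cast [Nat.cast_sub (by omega : 1 ≤ ℓ)]; ring
  have hq : (a :: t).length = q.length := by simp [q, ht]
  have hlower : |a| + (ℓ - 1 : ℝ) / 2 ≤ dtw (a :: t) q := by
    refine le_dtw hq fun x' y' hx hy hxy => ?_
    simpa [hcast] using abs_add_le_l1Dist_of_isExpansion hbin hx hy hxy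
  have hupper : a = 0 → dtw (a :: t) q ≤ (ℓ - 1 : ℝ) / 2 := by
    rintro rfl
    calc dtw (0 :: t) q ≤ l1Dist (0 :: t) q := dtw_le_l1Dist hq
      _ = (ℓ - 1 : ℝ) / 2 := by
        simp only [q, l1Dist_cons_cons, sub_zero, abs_zero, zero_add, ← ht]
        rw [l1Dist_replicate_half fun c hc => hbin c (.tail _ hc), ht, hcast]
  refine ⟨by linarith [abs_nonneg a], fun h => ?_, fun h => ?_⟩
  · rcases hbin a List.mem_cons_self with rfl | rfl
    · rfl
    · norm_num at hlower
      linarith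
  · exact le_antisymm (hupper (by simpa using h)) (by linarith [abs_nonneg a])
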